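/- arXiv:2103.10888 — 3 statements merged into one kernel-verified Lean document; each statement's English description precedes it below -/
import Mathlib

section
/- Let α₁, α₂, m₁, m₂ > 0 and c ≠ 0. Define the 3×3 matrix A with rows (-α₁/m₁, 0, 0), (1, 0, -1), (0, 0, -α₂/m₂), the column vector B = (0, 0, 1/m₂)ᵀ, and the row vector C = (0, c, 0). Let p₂₂ = |c|α₂ + c²m₂/α₂, p₃₃ = |c|m₂²/α₂, G₂ = 0, G₃ = |c|m₂/α₂, and let p₁₁, G₁ be given by the stated formulas. Then the symmetric matrix P with diagonal (p₁₁,p₂₂,p₃₃) and off-diagonal entries P₁₂ = (α₁/m₁)p₁₁, P₂₃ = -(α₂/m₂)p₃₃, P₁₃ = -((α₁/m₁)p₁₁ + (α₂/m₂)p₃₃)/((α₁/m₁)+(α₂/m₂)) satisfies the algebraic Riccati equation AᵀP + PA - PBBᵀP + CᵀC + GᵀG = 0 with G = (G₁,G₂,G₃). -/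
open Matrix

/-!
Writing `a = α₁/m₁`, `b = α₂/m₂`, `β = 1/m₂` and `p₁₃` for the (1,3) entry of `P`, every entry of
the Riccati residual is a polynomial identity in these quantities: the (1,3) entry of `AᵀP + PA`
vanishes by the choice of `p₁₃`, the (1,1) and (3,3) entries say `G₁ = β p₁₃`, `G₃ = β p₃₃`,
the (2,2) entry says `b β p₃₃ = ±c`, the (2,3) entry determines `p₂₂`, and the (1,2) entry is
linear in `p₁₁` and determines it.
-/

theorem riccati_residual_eq_zero {R : Type*} [CommRing R]
    (a b β c p₁₁ p₂₂ p₃₃ p₁₃ g₁ g₃ : R)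
    (h₁₃ : (a + b) * p₁₃ + (a * p₁₁ + b * p₃₃) = 0)
    (hg₁ : g₁ = β * p₁₃) (hg₃ : g₃ = β * p₃₃)
    (hc : c ^ 2 = (b * β * p₃₃) ^ 2)
    (h₂₂ : p₂₂ = b ^ 2 * p₃₃ + b * β ^ 2 * p₃₃ ^ 2)
    (h₁₁ : a ^ 2 * p₁₁ = p₂₂ + b * β ^ 2 * p₁₃ * p₃₃) :
    let A : Matrix (Fin 3) (Fin 3) R := !![-a, 0, 0; 1, 0, -1; 0, 0, -b]
    let B : Matrix (Fin 3) (Fin 1) R := !![0; 0; β]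
    let C : Matrix (Fin 1) (Fin 3) R := !![0, c, 0]
    let G : Matrix (Fin 1) (Fin 3) R := !![g₁, 0, g₃]
    let P : Matrix (Fin 3) (Fin 3) R :=
      !![p₁₁, a * p₁₁, p₁₃; a * p₁₁, p₂₂, -b * p₃₃; p₁₃, -b * p₃₃, p₃₃]
    Aᵀ * P + P * A - P * B * Bᵀ * P + Cᵀ * C + Gᵀ * G = 0 := by
  intro A B C G P
  subst hg₁ hg₃
  ext i j
  fin_cases i <;> fin_cases j <;>
    simp [A, B, C, G, P, mul_apply, Fin.sum_univ_succ, vecMul, dotProduct, vecHead, vecTail] <;>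
    grind

theorem stmt_6_general (α₁ α₂ m₁ m₂ c : ℝ)
    (hα₁ : 0 < α₁) (hα₂ : 0 < α₂) (hm₁ : 0 < m₁) (hm₂ : 0 < m₂)
    (A : Matrix (Fin 3) (Fin 3) ℝ) (B : Matrix (Fin 3) (Fin 1) ℝ)
    (C G : Matrix (Fin 1) (Fin 3) ℝ) (P : Matrix (Fin 3) (Fin 3) ℝ)
    (p₁₁ p₂₂ p₃₃ G₁ G₂ G₃ : ℝ)
    (hA : A = !![-(α₁ / m₁), 0, 0; 1, 0, -1; 0, 0, -(α₂ / m₂)])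
    (hB : B = !![0; 0; 1 / m₂])
    (hC : C = !![0, c, 0])
    (hp₁₁ : p₁₁ = (|c| * α₂ + c ^ 2 * m₂ / α₂ -
        c ^ 2 * ((m₁ / α₁) * (m₂ / α₂)) / ((m₁ / α₁) + (m₂ / α₂))) /
        (|c| * α₁ / (α₁ * m₂ + α₂ * m₁) + α₁ ^ 2 / m₁ ^ 2))
    (hp₂₂ : p₂₂ = |c| * α₂ + c ^ 2 * m₂ / α₂)
    (hp₃₃ : p₃₃ = |c| * m₂ ^ 2 / α₂)
    (hG₁ : G₁ = -(α₁ * m₂ * p₁₁ + α₂ * m₁ * p₃₃) / (α₁ * m₂ ^ 2 + α₂ * m₁ * m₂))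
    (hG₂ : G₂ = 0)
    (hG₃ : G₃ = |c| * m₂ / α₂)
    (hG : G = !![G₁, G₂, G₃])
    (hP : P = !![p₁₁, (α₁ / m₁) * p₁₁,
          -((α₁ / m₁) * p₁₁ + (α₂ / m₂) * p₃₃) / ((α₁ / m₁) + (α₂ / m₂));
        (α₁ / m₁) * p₁₁, p₂₂, -(α₂ / m₂) * p₃₃;
        -((α₁ / m₁) * p₁₁ + (α₂ / m₂) * p₃₃) / ((α₁ / m₁) + (α₂ / m₂)),
          -(α₂ / m₂) * p₃₃, p₃₃]) :
    Aᵀ * P + P * A - P * B * Bᵀ * P + Cᵀ * C + Gᵀ * G = 0 := by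
  rw [← sq_abs c] at hp₁₁ hp₂₂
  have hk : α₂ / m₂ * (1 / m₂) * p₃₃ = |c| := by
    rw [hp₃₃]; field_simp
  have hab : α₁ / m₁ + α₂ / m₂ ≠ 0 := by positivity
  subst hA hB hC hG hP hG₂
  refine riccati_residual_eq_zero (α₁ / m₁) (α₂ / m₂) (1 / m₂) c p₁₁ p₂₂ p₃₃ _ G₁ G₃
    ?_ ?_ ?_ ?_ ?_ ?_
  · field_simp
    ring
  · rw [hG₁]
    field_simp
  · rw [hG₃, hp₃₃]
    field_simp
  · rw [hk, sq_abs]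
  · rw [hp₂₂, hp₃₃]
    field_simp
  · rw [hp₁₁, hp₂₂, hp₃₃]
    field_simp
    ring

theorem stmt_6 (α₁ α₂ m₁ m₂ c : ℝ)
    (hα₁ : 0 < α₁) (hα₂ : 0 < α₂) (hm₁ : 0 < m₁) (hm₂ : 0 < m₂) (hc : c ≠ 0)
    (A : Matrix (Fin 3) (Fin 3) ℝ) (B : Matrix (Fin 3) (Fin 1) ℝ)
    (C G : Matrix (Fin 1) (Fin 3) ℝ) (P : Matrix (Fin 3) (Fin 3) ℝ)
    (p₁₁ p₂₂ p₃₃ G₁ G₂ G₃ : ℝ)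
    (hA : A = !![-(α₁ / m₁), 0, 0; 1, 0, -1; 0, 0, -(α₂ / m₂)])
    (hB : B = !![0; 0; 1 / m₂])
    (hC : C = !![0, c, 0])
    (hp₁₁ : p₁₁ = (|c| * α₂ + c ^ 2 * m₂ / α₂ -
        c ^ 2 * ((m₁ / α₁) * (m₂ / α₂)) / ((m₁ / α₁) + (m₂ / α₂))) /
        (|c| * α₁ / (α₁ * m₂ + α₂ * m₁) + α₁ ^ 2 / m₁ ^ 2))
    (hp₂₂ : p₂₂ = |c| * α₂ + c ^ 2 * m₂ / α₂)
    (hp₃₃ : p₃₃ = |c| * m₂ ^ 2 / α₂)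
    (hG₁ : G₁ = -(α₁ * m₂ * p₁₁ + α₂ * m₁ * p₃₃) / (α₁ * m₂ ^ 2 + α₂ * m₁ * m₂))
    (hG₂ : G₂ = 0)
    (hG₃ : G₃ = |c| * m₂ / α₂)
    (hG : G = !![G₁, G₂, G₃])
    (hP : P = !![p₁₁, (α₁ / m₁) * p₁₁,
          -((α₁ / m₁) * p₁₁ + (α₂ / m₂) * p₃₃) / ((α₁ / m₁) + (α₂ / m₂));
        (α₁ / m₁) * p₁₁, p₂₂, -(α₂ / m₂) * p₃₃;
        -((α₁ / m₁) * p₁₁ + (α₂ / m₂) * p₃₃) / ((α₁ / m₁) + (α₂ / m₂)),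
          -(α₂ / m₂) * p₃₃, p₃₃]) :
    Aᵀ * P + P * A - P * B * Bᵀ * P + Cᵀ * C + Gᵀ * G = 0 :=
  stmt_6_general α₁ α₂ m₁ m₂ c hα₁ hα₂ hm₁ hm₂ A B C G P p₁₁ p₂₂ p₃₃ G₁ G₂ G₃ hA hB hC hp₁₁ hp₂₂
    hp₃₃ hG₁ hG₂ hG₃ hG hP
end

section
/- Let α₁, α₂, m₁, m₂ > 0, c ≠ 0, and let P be the 3×3 symmetric matrix from the car-following Riccati solution with p₂₂ = |c|α₂ + c²m₂/α₂ > 0, p₃₃ = |c|m₂²/α₂ > 0, p₁₁ as stated, and off-diagonal entries determined by the kernel relations. If all leading principal minors of P are nonnegative and P is symmetric, then P is positive semidefinite, i.e., xᵀPx ≥ 0 for all x ∈ ℝ³. -/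
open Matrix

lemma aux_psd3 (A B C D E F : ℝ) (hA : 0 < A) (h2 : 0 < A * D - B ^ 2)
    (h3 : 0 ≤ A * D * F + 2 * B * E * C - C ^ 2 * D - E ^ 2 * A - B ^ 2 * F)
    (x y z : ℝ) :
    0 ≤ A * x ^ 2 + D * y ^ 2 + F * z ^ 2 + 2 * B * x * y + 2 * C * x * z
      + 2 * E * y * z := by
  have key : (A * (A * D - B ^ 2)) *
      (A * x ^ 2 + D * y ^ 2 + F * z ^ 2 + 2 * B * x * y + 2 * C * x * z
        + 2 * E * y * z)
      = (A * D - B ^ 2) * (A * x + B * y + C * z) ^ 2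
        + ((A * D - B ^ 2) * y + (A * E - B * C) * z) ^ 2
        + A * (A * D * F + 2 * B * E * C - C ^ 2 * D - E ^ 2 * A - B ^ 2 * F)
          * z ^ 2 := by ring
  nlinarith [mul_nonneg h2.le (sq_nonneg (A * x + B * y + C * z)),
    sq_nonneg ((A * D - B ^ 2) * y + (A * E - B * C) * z),
    mul_nonneg (mul_nonneg hA.le h3) (sq_nonneg z), mul_pos hA h2]

set_option maxHeartbeats 1000000 in
theorem stmt_9 (α₁ α₂ m₁ m₂ c : ℝ)
    (hα₁ : 0 < α₁) (hα₂ : 0 < α₂) (hm₁ : 0 < m₁) (hm₂ : 0 < m₂) (hc : c ≠ 0)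
    (p₁₁ p₂₂ p₃₃ : ℝ)
    (hp₁₁ : p₁₁ = (|c| * α₂ + c ^ 2 * m₂ / α₂ -
        c ^ 2 * ((m₁ / α₁) * (m₂ / α₂)) / ((m₁ / α₁) + (m₂ / α₂))) /
        (|c| * α₁ / (α₁ * m₂ + α₂ * m₁) + α₁ ^ 2 / m₁ ^ 2))
    (hp₂₂ : p₂₂ = |c| * α₂ + c ^ 2 * m₂ / α₂)
    (hp₃₃ : p₃₃ = |c| * m₂ ^ 2 / α₂)
    (P : Matrix (Fin 3) (Fin 3) ℝ)
    (hP : P = !![p₁₁, (α₁ / m₁) * p₁₁,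
          -((α₁ / m₁) * p₁₁ + (α₂ / m₂) * p₃₃) / ((α₁ / m₁) + (α₂ / m₂));
        (α₁ / m₁) * p₁₁, p₂₂, -(α₂ / m₂) * p₃₃;
        -((α₁ / m₁) * p₁₁ + (α₂ / m₂) * p₃₃) / ((α₁ / m₁) + (α₂ / m₂)),
          -(α₂ / m₂) * p₃₃, p₃₃])
    (hsymm : P.IsSymm)
    (hminor1 : 0 ≤ P 0 0)
    (hminor2 : 0 ≤ (!![P 0 0, P 0 1; P 1 0, P 1 1]).det)
    (hminor3 : 0 ≤ P.det) :
    ∀ x : Fin 3 → ℝ, 0 ≤ x ⬝ᵥ P.mulVec x := by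
  intro x
  subst hP
  have hcc : 0 < |c| := abs_pos.mpr hc
  have hc2 : c ^ 2 = |c| ^ 2 := (sq_abs c).symm
  obtain ⟨N, hN_def⟩ : ∃ N : ℝ, N = |c| * α₂ + c ^ 2 * m₂ / α₂ -
      c ^ 2 * ((m₁ / α₁) * (m₂ / α₂)) / ((m₁ / α₁) + (m₂ / α₂)) := ⟨_, rfl⟩
  obtain ⟨Dd, hD_def⟩ : ∃ Dd : ℝ,
      Dd = |c| * α₁ / (α₁ * m₂ + α₂ * m₁) + α₁ ^ 2 / m₁ ^ 2 := ⟨_, rfl⟩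
  rw [← hN_def, ← hD_def] at hp₁₁
  -- N > 0
  have hfrac : (m₁ / α₁) * (m₂ / α₂) / ((m₁ / α₁) + (m₂ / α₂)) ≤ m₂ / α₂ := by
    rw [div_le_iff₀ (by positivity)]
    have h1 : 0 < m₁ / α₁ := by positivity
    have h2 : 0 < m₂ / α₂ := by positivity
    nlinarith
  have hN : 0 < N := by
    have h2 : 0 ≤ c ^ 2 * (m₂ / α₂) - c ^ 2 * ((m₁ / α₁) * (m₂ / α₂)) / ((m₁ / α₁) + (m₂ / α₂)) := by
      have := mul_le_mul_of_nonneg_left hfrac (sq_nonneg c)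
      have he : c ^ 2 * ((m₁ / α₁) * (m₂ / α₂) / ((m₁ / α₁) + (m₂ / α₂)))
          = c ^ 2 * ((m₁ / α₁) * (m₂ / α₂)) / ((m₁ / α₁) + (m₂ / α₂)) := by ring
      linarith [he ▸ this]
    have : c ^ 2 * m₂ / α₂ = c ^ 2 * (m₂ / α₂) := by ring
    rw [hN_def]
    nlinarith [mul_pos hcc hα₂]
  have hDd : (α₁ / m₁) ^ 2 < Dd := by
    rw [hD_def]
    have h1 : 0 < |c| * α₁ / (α₁ * m₂ + α₂ * m₁) := by positivity
    have h2 : (α₁ / m₁) ^ 2 = α₁ ^ 2 / m₁ ^ 2 := by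
      rw [div_pow]
    linarith
  have hDd0 : 0 < Dd := lt_of_le_of_lt (sq_nonneg _) hDd
  have h11 : 0 < p₁₁ := by rw [hp₁₁]; exact div_pos hN hDd0
  -- p₂₂ - a² p₁₁ > 0
  have hNle : N ≤ p₂₂ := by
    rw [hN_def, hp₂₂]
    have : 0 ≤ c ^ 2 * ((m₁ / α₁) * (m₂ / α₂)) / ((m₁ / α₁) + (m₂ / α₂)) := by positivity
    linarith
  have hd2' : (α₁ / m₁) ^ 2 * p₁₁ < p₂₂ := by
    have h : (α₁ / m₁) ^ 2 * p₁₁ < N := by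
      rw [hp₁₁, ← mul_div_assoc, div_lt_iff₀ hDd0]
      nlinarith [mul_lt_mul_of_pos_right hDd hN]
    linarith
  have hd2 : 0 < p₁₁ * p₂₂ - ((α₁ / m₁) * p₁₁) ^ 2 := by nlinarith
  -- det nonneg in explicit form
  simp [Matrix.det_fin_three] at hminor3
  have h3 : 0 ≤ p₁₁ * p₂₂ * p₃₃ +
      2 * ((α₁ / m₁) * p₁₁) * (-(α₂ / m₂) * p₃₃) *
        (-((α₁ / m₁) * p₁₁ + (α₂ / m₂) * p₃₃) / ((α₁ / m₁) + (α₂ / m₂))) -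
      (-((α₁ / m₁) * p₁₁ + (α₂ / m₂) * p₃₃) / ((α₁ / m₁) + (α₂ / m₂))) ^ 2 * p₂₂ -
      (-(α₂ / m₂) * p₃₃) ^ 2 * p₁₁ - ((α₁ / m₁) * p₁₁) ^ 2 * p₃₃ := by
    have e : p₁₁ * p₂₂ * p₃₃ +
        2 * ((α₁ / m₁) * p₁₁) * (-(α₂ / m₂) * p₃₃) *
          (-((α₁ / m₁) * p₁₁ + (α₂ / m₂) * p₃₃) / ((α₁ / m₁) + (α₂ / m₂))) -
        (-((α₁ / m₁) * p₁₁ + (α₂ / m₂) * p₃₃) / ((α₁ / m₁) + (α₂ / m₂))) ^ 2 * p₂₂ -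
        (-(α₂ / m₂) * p₃₃) ^ 2 * p₁₁ - ((α₁ / m₁) * p₁₁) ^ 2 * p₃₃
        = (p₁₁ * p₂₂ * p₃₃ - p₁₁ * (α₂ / m₂ * p₃₃) * (α₂ / m₂ * p₃₃) -
            α₁ / m₁ * p₁₁ * (α₁ / m₁ * p₁₁) * p₃₃)
          - ((-(α₂ / m₂ * p₃₃) + -(α₁ / m₁ * p₁₁)) / (α₁ / m₁ + α₂ / m₂) * p₂₂ *
              ((-(α₂ / m₂ * p₃₃) + -(α₁ / m₁ * p₁₁)) / (α₁ / m₁ + α₂ / m₂)) +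
            (-(α₂ / m₂ * p₃₃) + -(α₁ / m₁ * p₁₁)) / (α₁ / m₁ + α₂ / m₂) *
              (α₁ / m₁ * p₁₁) * (α₂ / m₂ * p₃₃) +
            α₁ / m₁ * p₁₁ * (α₂ / m₂ * p₃₃) *
              ((-(α₂ / m₂ * p₃₃) + -(α₁ / m₁ * p₁₁)) / (α₁ / m₁ + α₂ / m₂))) := by
      ring
    rw [e]
    linarith [hminor3]
  have key := aux_psd3 p₁₁ ((α₁ / m₁) * p₁₁)
    (-((α₁ / m₁) * p₁₁ + (α₂ / m₂) * p₃₃) / ((α₁ / m₁) + (α₂ / m₂)))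
    p₂₂ (-(α₂ / m₂) * p₃₃) p₃₃ h11 hd2 h3 (x 0) (x 1) (x 2)
  simp [dotProduct, Matrix.mulVec, Fin.sum_univ_three]
  have e2 : p₁₁ * x 0 ^ 2 + p₂₂ * x 1 ^ 2 + p₃₃ * x 2 ^ 2 +
        2 * ((α₁ / m₁) * p₁₁) * x 0 * x 1 +
        2 * (-((α₁ / m₁) * p₁₁ + (α₂ / m₂) * p₃₃) / ((α₁ / m₁) + (α₂ / m₂))) * x 0 * x 2 +
        2 * (-(α₂ / m₂) * p₃₃) * x 1 * x 2
      = x 0 * (p₁₁ * x 0 + α₁ / m₁ * p₁₁ * x 1 +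
            (-(α₂ / m₂ * p₃₃) + -(α₁ / m₁ * p₁₁)) / (α₁ / m₁ + α₂ / m₂) * x 2) +
          x 1 * (α₁ / m₁ * p₁₁ * x 0 + p₂₂ * x 1 + -(α₂ / m₂ * p₃₃ * x 2)) +
          x 2 * ((-(α₂ / m₂ * p₃₃) + -(α₁ / m₁ * p₁₁)) / (α₁ / m₁ + α₂ / m₂) * x 0 +
            -(α₂ / m₂ * p₃₃ * x 1) + p₃₃ * x 2) := by ring
  exact e2 ▸ key
end

section
/- Let a > 0, ε ≥ 0, and let g : ℝ → ℝ be continuous with sign condition x·g(x) ≥ 0, |g| nondecreasing in |x|, and |g(x)| > ε for all |x| > δ for some δ > 0. Consider the planar system ẋ₂ = -x₃, ẋ₃ = -a·x₃ + v(t) with disturbance |v(t) - g(x₂(t))| ≤ ε. If there exists a radially unbounded C¹ function V with V̇ ≤ 0 outside a ball of radius r, then all solutions are uniformly ultimately bounded. -/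
/-!
Along a solution, `x₂` is a damped oscillator `ẍ₂ + a ẋ₂ + g(x₂) = -w` with `|w| ≤ ε`. The energy
`x₃²/2 + ∫₀^{x₂} g` only dissipates `a x₃²`, which does not beat the disturbance near `x₃ = 0`.
Adding the cross term `-k x₃ sat θ x₂` with the saturation `sat θ y = y / √(θ² + y²)`, and
`k a √(θ² + x₂²)` to cancel the `k a x₃ sat θ x₂` it creates, gives a function whose derivative
is at most `-1` outside the box `|x₂| ≤ θ, |x₃| ≤ S`: for `|x₂| ≥ θ` the input `v` has the sign of
`g(x₂)` and size at least `|g(x₂)| - ε`, so `-k (sat θ x₂) v` is a fixed negative amount, while for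
large `|x₃|` the term `-a x₃² / 2` wins. The function grows at least like `x₃²/4 + k a |x₂|`, so
every solution enters a fixed sublevel set after a time bounded in terms of its initial size.
-/

open Set Real
open scoped Interval

section Comparison

variable {φ f : ℝ → ℝ} {C : ℝ}

theorem le_of_hasDerivAt_of_nonpos_above (hφ : ∀ t, HasDerivAt φ (f t) t)
    (hf : ∀ t, C < φ t → f t ≤ 0) {u v : ℝ} (huv : u ≤ v) (hu : φ u ≤ C) : φ v ≤ C := by
  refine le_of_forall_pos_le_add fun e he => ?_
  -- fence `φ` by a line of slope `η > 0` lying strictly above `C` on `[u, v]`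
  set η := e / (1 + (v - u))
  have hη : 0 < η := div_pos he (by linarith)
  have fence := image_le_of_deriv_right_lt_deriv_boundary (B := fun t => C + η * (1 + (t - u)))
    (B' := fun _ => η) (fun t _ => (hφ t).continuousAt.continuousWithinAt)
    (fun t _ => (hφ t).hasDerivWithinAt) (by simp; linarith)
    (fun t => by
      simpa using ((hasDerivAt_id t).sub_const u).const_add 1 |>.const_mul η |>.const_add C)
    (fun t ht hφt => (hf t (by nlinarith [ht.1])).trans_lt hη) ⟨huv, le_rfl⟩
  have : η * (1 + (v - u)) = e := div_mul_cancel₀ e (by linarith)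
  linarith

theorem sub_le_of_hasDerivAt_le_neg_one (hφ : ∀ t, HasDerivAt φ (f t) t) {u v : ℝ} (huv : u ≤ v)
    (hf : ∀ t ∈ Ico u v, f t ≤ -1) : φ v ≤ φ u - (v - u) := by
  have := image_le_of_deriv_right_le_deriv_boundary (B := fun t => φ u - (t - u))
    (B' := fun _ => -1) (fun t _ => (hφ t).continuousAt.continuousWithinAt)
    (fun t _ => (hφ t).hasDerivWithinAt) (by simp) (by fun_prop)
    (fun t _ => by
      simpa using ((hasDerivAt_id t).sub_const u).const_sub (φ u) |>.hasDerivWithinAt) hf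
    ⟨huv, le_rfl⟩
  simpa using this

theorem le_of_hasDerivAt_le_neg_one_above (hφ : ∀ t, HasDerivAt φ (f t) t)
    (hf : ∀ t, C < φ t → f t ≤ -1) {t₀ t : ℝ} (ht : t₀ ≤ t) (hT : φ t₀ - C ≤ t - t₀) :
    φ t ≤ C := by
  by_contra! hC
  have above : ∀ s ∈ Ico t₀ t, C < φ s := fun s hs => by
    by_contra! hs'
    exact hC.not_ge (le_of_hasDerivAt_of_nonpos_above hφ
      (fun r hr => (hf r hr).trans (by norm_num)) hs.2.le hs')
  have := sub_le_of_hasDerivAt_le_neg_one hφ ht fun s hs => hf s (above s hs)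
  linarith

end Comparison

noncomputable def sat (θ y : ℝ) : ℝ := y / √(θ ^ 2 + y ^ 2)

section Saturation

variable {θ : ℝ}

theorem hasDerivAt_sqrt_sq_add_sq (hθ : θ ≠ 0) (y : ℝ) :
    HasDerivAt (fun y => √(θ ^ 2 + y ^ 2)) (sat θ y) y := by
  have hpos : θ ^ 2 + y ^ 2 ≠ 0 := by positivity
  convert ((hasDerivAt_pow 2 y).const_add (θ ^ 2)).sqrt hpos using 1
  rw [sat]
  field_simp
  ring

theorem hasDerivAt_sat (hθ : θ ≠ 0) (y : ℝ) :
    HasDerivAt (sat θ) (θ ^ 2 / √(θ ^ 2 + y ^ 2) ^ 3) y := by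
  have hpos : 0 < θ ^ 2 + y ^ 2 := by positivity
  have hr : √(θ ^ 2 + y ^ 2) ≠ 0 := (sqrt_pos.2 hpos).ne'
  refine ((hasDerivAt_id' y).div (hasDerivAt_sqrt_sq_add_sq hθ y) hr).congr_deriv ?_
  have hsq := sq_sqrt hpos.le
  simp only [sat]
  field_simp
  linear_combination hsq

theorem sat_deriv_le (hθ : 0 < θ) (y : ℝ) : θ ^ 2 / √(θ ^ 2 + y ^ 2) ^ 3 ≤ 1 / θ := by
  have hθr : θ ≤ √(θ ^ 2 + y ^ 2) := le_sqrt_of_sq_le (by nlinarith)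
  rw [div_le_div_iff₀ (by positivity) hθ]
  calc θ ^ 2 * θ = θ ^ 3 := by ring
    _ ≤ √(θ ^ 2 + y ^ 2) ^ 3 := by gcongr
    _ = 1 * √(θ ^ 2 + y ^ 2) ^ 3 := (one_mul _).symm

theorem abs_le_sqrt_sq_add_sq (y : ℝ) : |y| ≤ √(θ ^ 2 + y ^ 2) :=
  abs_le_sqrt (by nlinarith)

theorem sqrt_sq_add_sq_le (y : ℝ) : √(θ ^ 2 + y ^ 2) ≤ |θ| + |y| := by
  rw [sqrt_le_left (by positivity)]
  nlinarith [abs_nonneg θ, abs_nonneg y, sq_abs θ, sq_abs y, abs_mul_abs_self θ]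

theorem abs_sat_le_one (y : ℝ) : |sat θ y| ≤ 1 := by
  rw [sat, abs_div, abs_of_nonneg (sqrt_nonneg _)]
  exact div_le_one_of_le₀ (abs_le_sqrt_sq_add_sq y) (sqrt_nonneg _)

theorem half_le_abs_sat (hθ : 0 < θ) {y : ℝ} (hy : θ ≤ |y|) : 1 / 2 ≤ |sat θ y| := by
  rw [sat, abs_div, abs_of_nonneg (sqrt_nonneg _), le_div_iff₀ (by positivity)]
  calc 1 / 2 * √(θ ^ 2 + y ^ 2) ≤ 1 / 2 * (θ + |y|) := by
        gcongr; simpa [abs_of_pos hθ] using sqrt_sq_add_sq_le (θ := θ) y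
    _ ≤ |y| := by linarith

end Saturation

section Primitive

variable {g : ℝ → ℝ}

theorem integral_nonneg_of_mul_nonneg (hg : Continuous g) (hsign : ∀ x, 0 ≤ x * g x) (y : ℝ) :
    0 ≤ ∫ x in (0 : ℝ)..y, g x := by
  set G := fun y => ∫ x in (0 : ℝ)..y, g x
  have hG : ∀ y, HasDerivAt G (g y) y := fun y => (hg.integral_hasStrictDerivAt 0 y).hasDerivAt
  have hGc : Continuous G := continuous_iff_continuousAt.2 fun y => (hG y).continuousAt
  have hG0 : G 0 = 0 := intervalIntegral.integral_same
  rcases le_total 0 y with hy | hy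
  · have hmono : MonotoneOn G (Ici 0) := by
      refine monotoneOn_of_hasDerivWithinAt_nonneg (convex_Ici 0) hGc.continuousOn
        (fun x _ => (hG x).hasDerivWithinAt) fun x hx => ?_
      rw [interior_Ici] at hx
      exact nonneg_of_mul_nonneg_right (hsign x) hx
    simpa [hG0] using hmono self_mem_Ici hy hy
  · have hanti : AntitoneOn G (Iic 0) := by
      refine antitoneOn_of_hasDerivWithinAt_nonpos (convex_Iic 0) hGc.continuousOn
        (fun x _ => (hG x).hasDerivWithinAt) fun x hx => ?_
      rw [interior_Iic] at hx
      exact nonpos_of_mul_nonneg_right (hsign x) hx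
    simpa [hG0] using hanti hy self_mem_Iic hy

theorem integral_le_mul_abs (hmono : ∀ x y : ℝ, |x| ≤ |y| → |g x| ≤ |g y|) {y R : ℝ}
    (hy : |y| ≤ R) : ∫ x in (0 : ℝ)..y, g x ≤ R * |g R| := by
  have hbound : ∀ x ∈ Ι (0 : ℝ) y, ‖g x‖ ≤ |g R| := fun x hx => by
    have hxy : |x| ≤ |y| := by simpa using abs_sub_left_of_mem_uIcc (uIoc_subset_uIcc hx)
    exact hmono x R (hxy.trans (hy.trans (le_abs_self R)))
  calc ∫ x in (0 : ℝ)..y, g x ≤ ‖∫ x in (0 : ℝ)..y, g x‖ := le_norm_self _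
    _ ≤ |g R| * |y - 0| := intervalIntegral.norm_integral_le_of_norm_le_const hbound
    _ ≤ R * |g R| := by rw [sub_zero, mul_comm]; gcongr

end Primitive

theorem norm_prod_le_iff_abs {y s r : ℝ} : ‖(y, s)‖ ≤ r ↔ |y| ≤ r ∧ |s| ≤ r := by
  simp only [Prod.norm_mk, Real.norm_eq_abs, max_le_iff]

noncomputable def lyapunov (G : ℝ → ℝ) (a θ k y s : ℝ) : ℝ :=
  s ^ 2 / 2 + G y + k * a * √(θ ^ 2 + y ^ 2) - k * s * sat θ y

noncomputable def lyapunovRate (g : ℝ → ℝ) (a θ k y s v : ℝ) : ℝ :=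
  -a * s ^ 2 + s * (v - g y) + k * (θ ^ 2 / √(θ ^ 2 + y ^ 2) ^ 3) * s ^ 2 - k * sat θ y * v

section Lyapunov

variable {g G : ℝ → ℝ} {a θ k ε : ℝ}

theorem hasDerivAt_lyapunov (hθ : θ ≠ 0) (hG : ∀ y, HasDerivAt G (g y) y) {x₂ x₃ : ℝ → ℝ}
    {v t : ℝ} (hx₂ : HasDerivAt x₂ (-x₃ t) t) (hx₃ : HasDerivAt x₃ (-a * x₃ t + v) t) :
    HasDerivAt (fun t => lyapunov G a θ k (x₂ t) (x₃ t))
      (lyapunovRate g a θ k (x₂ t) (x₃ t) v) t := by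
  have hGx := (hG (x₂ t)).comp t hx₂
  have hPx := (hasDerivAt_sqrt_sq_add_sq hθ (x₂ t)).comp t hx₂
  have hHx := (hasDerivAt_sat hθ (x₂ t)).comp t hx₂
  refine (((((hx₃.pow 2).div_const 2).add hGx).add (hPx.const_mul (k * a))).sub
    ((hx₃.const_mul k).mul hHx)).congr_deriv ?_
  simp only [lyapunovRate, Function.comp_apply]
  ring

theorem lyapunov_le (hk : 0 ≤ k) (ha : 0 ≤ a) (hθ : 0 ≤ θ) {y s R R' B : ℝ} (hy : |y| ≤ R)
    (hs : |s| ≤ R') (hG : G y ≤ B) :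
    lyapunov G a θ k y s ≤ R' ^ 2 / 2 + B + k * a * (θ + R) + k * R' := by
  have hP : √(θ ^ 2 + y ^ 2) ≤ θ + R := by
    refine (sqrt_sq_add_sq_le y).trans ?_
    rw [abs_of_nonneg hθ]
    linarith
  have hsH : -(s * sat θ y) ≤ R' := by
    calc -(s * sat θ y) ≤ |s| * |sat θ y| := by rw [← abs_mul]; exact neg_le_abs _
      _ ≤ R' * 1 := mul_le_mul hs (abs_sat_le_one y) (abs_nonneg _) ((abs_nonneg s).trans hs)
      _ = R' := mul_one R'
  have hs2 : s ^ 2 ≤ R' ^ 2 := by rw [← sq_abs s]; exact pow_le_pow_left₀ (abs_nonneg s) hs 2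
  unfold lyapunov
  have := mul_le_mul_of_nonneg_left hP (mul_nonneg hk ha)
  nlinarith

theorem sq_add_abs_le_of_lyapunov_le (hk : 0 ≤ k) (ha : 0 ≤ a) {y s Ω : ℝ} (hG : 0 ≤ G y)
    (h : lyapunov G a θ k y s ≤ Ω) : s ^ 2 / 4 + k * a * |y| ≤ Ω + k ^ 2 := by
  have hP := mul_le_mul_of_nonneg_left (abs_le_sqrt_sq_add_sq (θ := θ) y) (mul_nonneg hk ha)
  have hsH : s * sat θ y ≤ |s| := by
    calc s * sat θ y ≤ |s| * |sat θ y| := by rw [← abs_mul]; exact le_abs_self _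
      _ ≤ |s| * 1 := mul_le_mul_of_nonneg_left (abs_sat_le_one y) (abs_nonneg s)
      _ = |s| := mul_one _
  have hamgm : k * |s| ≤ s ^ 2 / 4 + k ^ 2 := by nlinarith [sq_nonneg (|s| - 2 * k), sq_abs s]
  unfold lyapunov at h
  nlinarith [mul_le_mul_of_nonneg_left hsH hk]

theorem norm_le_of_lyapunov_le (hk : 0 < k) (ha : 0 < a) {y s Ω : ℝ} (hG : 0 ≤ G y)
    (h : lyapunov G a θ k y s ≤ Ω) : ‖(y, s)‖ ≤ (Ω + k ^ 2) / (k * a) + √(4 * (Ω + k ^ 2)) := by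
  have hsy := sq_add_abs_le_of_lyapunov_le hk.le ha.le hG h
  have hka : 0 ≤ k * a * |y| := by positivity
  have hy : |y| ≤ (Ω + k ^ 2) / (k * a) := by
    rw [le_div_iff₀ (by positivity)]; nlinarith [sq_nonneg s]
  have hs : |s| ≤ √(4 * (Ω + k ^ 2)) := abs_le_sqrt (by nlinarith)
  refine norm_prod_le_iff_abs.2 ⟨?_, ?_⟩
  · linarith [sqrt_nonneg (4 * (Ω + k ^ 2))]
  · linarith [abs_nonneg y]

theorem lyapunovRate_le (ha : 0 < a) (hθ : 0 < θ) (hk : 0 ≤ k) (hkθ : 4 * k ≤ a * θ)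
    {y s v : ℝ} (hv : |v - g y| ≤ ε) :
    lyapunovRate g a θ k y s v ≤ -(a / 2) * s ^ 2 + ε ^ 2 / a - k * (sat θ y * v) := by
  have hkH : k * (θ ^ 2 / √(θ ^ 2 + y ^ 2) ^ 3) ≤ a / 4 :=
    calc k * (θ ^ 2 / √(θ ^ 2 + y ^ 2) ^ 3) ≤ k * (1 / θ) :=
        mul_le_mul_of_nonneg_left (sat_deriv_le hθ y) hk
      _ ≤ a / 4 := by rw [mul_one_div, div_le_iff₀ hθ]; linarith
  have hsv : s * (v - g y) ≤ |s| * ε := by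
    calc s * (v - g y) ≤ |s| * |v - g y| := by rw [← abs_mul]; exact le_abs_self _
      _ ≤ |s| * ε := mul_le_mul_of_nonneg_left hv (abs_nonneg s)
  have hamgm : |s| * ε ≤ a / 4 * s ^ 2 + ε ^ 2 / a := by
    rw [← sq_abs s]
    have := sq_nonneg (a * |s| - 2 * ε)
    field_simp
    nlinarith
  have := mul_le_mul_of_nonneg_right hkH (sq_nonneg s)
  unfold lyapunovRate
  nlinarith

theorem abs_mul_sub_le_mul {y v : ℝ} (hyg : 0 ≤ y * g y) (hv : |v - g y| ≤ ε) :
    |y| * (|g y| - ε) ≤ y * v := by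
  have h₁ : |y| * |g y| = y * g y := by rw [← abs_mul, abs_of_nonneg hyg]
  have h₂ : -(y * (v - g y)) ≤ |y| * ε := by
    calc -(y * (v - g y)) ≤ |y| * |v - g y| := by rw [← abs_mul]; exact neg_le_abs _
      _ ≤ |y| * ε := mul_le_mul_of_nonneg_left hv (abs_nonneg y)
  nlinarith

theorem sub_le_two_mul_sat_mul (hθ : 0 < θ) {y v : ℝ} (hy : θ ≤ |y|) (hyg : 0 ≤ y * g y)
    (hv : |v - g y| ≤ ε) (hε : ε ≤ |g y|) : |g y| - ε ≤ 2 * (sat θ y * v) := by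
  have hr : 0 < √(θ ^ 2 + y ^ 2) := sqrt_pos.2 (by positivity)
  have hsat : |sat θ y| * (|g y| - ε) ≤ sat θ y * v := by
    rw [sat, abs_div, abs_of_pos hr, div_mul_eq_mul_div, div_mul_eq_mul_div]
    exact div_le_div_of_nonneg_right (abs_mul_sub_le_mul hyg hv) hr.le
  nlinarith [half_le_abs_sat hθ hy]

theorem neg_sat_mul_le {y v : ℝ} (hv : |v - g y| ≤ ε) : -(sat θ y * v) ≤ |g y| + ε := by
  calc -(sat θ y * v) ≤ |sat θ y| * |v| := by rw [← abs_mul]; exact neg_le_abs _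
    _ ≤ 1 * |v| := mul_le_mul_of_nonneg_right (abs_sat_le_one y) (abs_nonneg v)
    _ ≤ |g y| + ε := by
      rw [one_mul]
      linarith [abs_sub_abs_le_abs_sub v (g y)]

theorem lyapunovRate_le_neg_one (ha : 0 < a) (hθ : 0 < θ) (hk : 0 ≤ k) (hkθ : 4 * k ≤ a * θ)
    (hsign : ∀ x, 0 ≤ x * g x) {c M S : ℝ} (hout : ∀ y, θ ≤ |y| → ε + c ≤ |g y|)
    (hkc : 2 * (ε ^ 2 / a + 1) ≤ k * c) (hband : ∀ y, |y| ≤ θ → |g y| ≤ M) (hS : 0 ≤ S)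
    (hkS : 2 * (ε ^ 2 / a + k * (M + ε) + 1) ≤ a * S ^ 2) {y s v : ℝ} (hv : |v - g y| ≤ ε)
    (hys : θ < |y| ∨ S < |s|) : lyapunovRate g a θ k y s v ≤ -1 := by
  have hrate := lyapunovRate_le ha hθ hk hkθ (s := s) hv
  have hεa : 0 ≤ ε ^ 2 / a := by positivity
  rcases le_or_gt θ |y| with hy | hy
  · have hc : 0 < c := pos_of_mul_pos_right (by linarith) hk
    have := sub_le_two_mul_sat_mul hθ hy (hsign y) hv (by linarith [hout y hy])
    have := mul_le_mul_of_nonneg_left (show c ≤ 2 * (sat θ y * v) by linarith [hout y hy]) hk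
    nlinarith [sq_nonneg s]
  · have hs : S < |s| := hys.resolve_left (not_lt.2 hy.le)
    have hSs : a * S ^ 2 ≤ a * s ^ 2 := by
      rw [← sq_abs s]; gcongr
    have := mul_le_mul_of_nonneg_left ((neg_sat_mul_le (θ := θ) hv).trans
      (by linarith [hband y hy.le] : |g y| + ε ≤ M + ε)) hk
    nlinarith

end Lyapunov

theorem exists_lyapunov {a ε δ : ℝ} {g : ℝ → ℝ} (ha : 0 < a) (hδ : 0 < δ) (hg : Continuous g)
    (hsign : ∀ x : ℝ, 0 ≤ x * g x) (hmono : ∀ x y : ℝ, |x| ≤ |y| → |g x| ≤ |g y|)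
    (hbig : ∀ x : ℝ, δ < |x| → ε < |g x|) :
    ∃ (W : ℝ → ℝ → ℝ) (Ω ε' : ℝ), 0 < ε' ∧ (∀ y s, W y s ≤ Ω → ‖(y, s)‖ ≤ ε') ∧
      (∀ δ', ∃ U, ∀ y s, ‖(y, s)‖ ≤ δ' → W y s ≤ U) ∧
      ∀ x₂ x₃ v : ℝ → ℝ, (∀ t, HasDerivAt x₂ (-(x₃ t)) t) →
        (∀ t, HasDerivAt x₃ (-a * x₃ t + v t) t) → (∀ t, |v t - g (x₂ t)| ≤ ε) →
        ∃ f : ℝ → ℝ, (∀ t, HasDerivAt (fun t => W (x₂ t) (x₃ t)) (f t) t) ∧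
          ∀ t, Ω < W (x₂ t) (x₃ t) → f t ≤ -1 := by
  set p := δ + 1
  have hp : 0 < p := by positivity
  have hc : 0 < |g p| - ε := sub_pos.2 (hbig p (by rw [abs_of_pos hp]; linarith))
  set k := 2 * (ε ^ 2 / a + 1) / (|g p| - ε)
  have hk : 0 < k := by positivity
  set θ := max (4 * k / a) p
  have hθ : 0 < θ := hp.trans_le (le_max_right _ _)
  have hkθ : 4 * k ≤ a * θ := by
    rw [← div_le_iff₀' ha]; exact le_max_left _ _
  set M := |g θ|
  set S := max 1 (2 * (ε ^ 2 / a + k * (M + ε) + 1) / a)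
  have hS : 1 ≤ S := le_max_left _ _
  have hkS : 2 * (ε ^ 2 / a + k * (M + ε) + 1) ≤ a * S ^ 2 := by
    rw [← div_le_iff₀' ha]; nlinarith [le_max_right 1 (2 * (ε ^ 2 / a + k * (M + ε) + 1) / a)]
  set G := fun y => ∫ x in (0 : ℝ)..y, g x
  set Ω := S ^ 2 / 2 + θ * M + k * a * (θ + θ) + k * S
  refine ⟨lyapunov G a θ k, Ω, (Ω + k ^ 2) / (k * a) + √(4 * (Ω + k ^ 2)), by positivity,
    fun y s hW => ?_, fun δ' => ?_, fun x₂ x₃ v hx₂ hx₃ hv => ?_⟩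
  · exact norm_le_of_lyapunov_le hk ha (integral_nonneg_of_mul_nonneg hg hsign y) hW
  · refine ⟨δ' ^ 2 / 2 + δ' * |g δ'| + k * a * (θ + δ') + k * δ', fun y s hys => ?_⟩
    obtain ⟨hy, hs⟩ := norm_prod_le_iff_abs.1 hys
    exact lyapunov_le hk.le ha.le hθ.le hy hs (integral_le_mul_abs hmono hy)
  · refine ⟨fun t => lyapunovRate g a θ k (x₂ t) (x₃ t) (v t),
      fun t => hasDerivAt_lyapunov hθ.ne' (fun y => (hg.integral_hasStrictDerivAt 0 y).hasDerivAt)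
        (hx₂ t) (hx₃ t), fun t hΩt => ?_⟩
    have hbox : θ < |x₂ t| ∨ S < |x₃ t| := by
      by_contra! h
      exact hΩt.not_ge (lyapunov_le hk.le ha.le hθ.le h.1 h.2 (integral_le_mul_abs hmono h.1))
    refine lyapunovRate_le_neg_one ha hθ hk.le hkθ hsign (c := |g p| - ε)
      (fun y hy => ?_) (by rw [div_mul_cancel₀ _ hc.ne']) (fun y hy => ?_) (by positivity) hkS
      (hv t) hbox
    · have := hmono p y (by rw [abs_of_pos hp]; exact (le_max_right _ _).trans hy)
      linarith
    · exact hmono y θ (by rwa [abs_of_pos hθ])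

theorem stmt_19_general (a ε δ : ℝ) (ha : 0 < a) (hδ : 0 < δ)
    (g : ℝ → ℝ) (hg : Continuous g)
    (hsign : ∀ x : ℝ, 0 ≤ x * g x)
    (hmono : ∀ x y : ℝ, |x| ≤ |y| → |g x| ≤ |g y|)
    (hbig : ∀ x : ℝ, δ < |x| → ε < |g x|) :
    ∃ ε' > 0, ∀ δ' > 0, ∃ T ≥ 0, ∀ (x₂ x₃ v : ℝ → ℝ) (t₀ : ℝ),
      (∀ t, HasDerivAt x₂ (-(x₃ t)) t) →
      (∀ t, HasDerivAt x₃ (-a * x₃ t + v t) t) →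
      (∀ t, |v t - g (x₂ t)| ≤ ε) →
      ‖(x₂ t₀, x₃ t₀)‖ ≤ δ' →
      ∀ t ≥ t₀ + T, ‖(x₂ t, x₃ t)‖ ≤ ε' := by
  obtain ⟨W, Ω, ε', hε', hsub, hbdd, hdecr⟩ := exists_lyapunov ha hδ hg hsign hmono hbig
  refine ⟨ε', hε', fun δ' _ => ?_⟩
  obtain ⟨U, hU⟩ := hbdd δ'
  refine ⟨max 0 (U - Ω), le_max_left _ _, fun x₂ x₃ v t₀ hx₂ hx₃ hv h₀ t ht => hsub _ _ ?_⟩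
  obtain ⟨f, hW, hf⟩ := hdecr x₂ x₃ v hx₂ hx₃ hv
  exact le_of_hasDerivAt_le_neg_one_above (t₀ := t₀) (t := t) hW hf
    (by linarith [le_max_left 0 (U - Ω)]) (by linarith [hU _ _ h₀, le_max_right 0 (U - Ω)])

theorem stmt_19 (a ε δ r : ℝ) (ha : 0 < a) (hε : 0 ≤ ε) (hδ : 0 < δ) (hr : 0 < r)
    (g : ℝ → ℝ) (hg : Continuous g)
    (hsign : ∀ x : ℝ, 0 ≤ x * g x)
    (hmono : ∀ x y : ℝ, |x| ≤ |y| → |g x| ≤ |g y|)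
    (hbig : ∀ x : ℝ, δ < |x| → ε < |g x|)
    (V : ℝ × ℝ → ℝ) (hV : ContDiff ℝ 1 V)
    (hrad : Filter.Tendsto V (Bornology.cobounded (ℝ × ℝ)) Filter.atTop)
    (hdec : ∀ (x₂ x₃ v : ℝ → ℝ),
      (∀ t, HasDerivAt x₂ (-(x₃ t)) t) →
      (∀ t, HasDerivAt x₃ (-a * x₃ t + v t) t) →
      (∀ t, |v t - g (x₂ t)| ≤ ε) →
      ∀ t, r ≤ ‖(x₂ t, x₃ t)‖ → deriv (fun s => V (x₂ s, x₃ s)) t ≤ 0) :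
    ∃ ε' > 0, ∀ δ' > 0, ∃ T ≥ 0, ∀ (x₂ x₃ v : ℝ → ℝ) (t₀ : ℝ),
      (∀ t, HasDerivAt x₂ (-(x₃ t)) t) →
      (∀ t, HasDerivAt x₃ (-a * x₃ t + v t) t) →
      (∀ t, |v t - g (x₂ t)| ≤ ε) →
      ‖(x₂ t₀, x₃ t₀)‖ ≤ δ' →
      ∀ t ≥ t₀ + T, ‖(x₂ t, x₃ t)‖ ≤ ε' :=
  stmt_19_general a ε δ ha hδ g hg hsign hmono hbig
end
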